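/- Let n ≥ 1, t > 0, p ∈ [1,∞), and x, y ∈ ℝⁿ. Let μ_x be the product probability measure on ℝⁿ whose i-th factor is gaussianReal(x_i, 2t), and define μ_y analogously. Then the infimum, over all couplings π of (μ_x, μ_y), of ∫ ‖u − v‖^p dπ(u,v) (Euclidean norm on ℝⁿ) equals ‖x − y‖^p; that is, W_p(μ_x, μ_y) = ‖x − y‖. -/

import Mathlib

open MeasureTheory ProbabilityTheory
open scoped RealInnerProductSpace

/-- The time-`t` heat kernel measure of the standard heat semigroup on `ℝⁿ` started at `x`:
the product of the Gaussians `gaussianReal (x i) (2t)`, viewed as a measure on Euclidean space. -/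
noncomputable def heatKernelMeasure (n : ℕ) (t : ℝ) (x : EuclideanSpace ℝ (Fin n)) :
    Measure (EuclideanSpace ℝ (Fin n)) :=
  Measure.map (MeasurableEquiv.toLp 2 (Fin n → ℝ))
    (Measure.pi fun i => gaussianReal (x i) ((2 * t).toNNReal))

open Real in

lemma my_integrable_id_gaussianReal {v : NNReal} (hv : v ≠ 0) (m : ℝ) :
    Integrable id (gaussianReal m v) := by
  rw [gaussianReal_of_var_ne_zero _ hv]
  rw [integrable_withDensity_iff (measurable_gaussianPDF _ _)
      (ae_of_all _ fun x => ENNReal.ofReal_lt_top)]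
  have hb : (0:ℝ) < (2 * v)⁻¹ := by positivity
  have h1 : Integrable (fun u : ℝ => (u + m) * rexp (-(2 * (v:ℝ))⁻¹ * u ^ 2)) := by
    simpa [add_mul, Pi.add_def] using (integrable_mul_exp_neg_mul_sq hb).add
      ((integrable_exp_neg_mul_sq hb).const_mul m)
  have h2 := h1.comp_sub_right m
  simp only [sub_add_cancel] at h2
  have h3 := h2.mul_const (√(2 * π * v))⁻¹
  refine h3.congr (ae_of_all _ fun u => ?_)
  simp only [gaussianPDF, gaussianPDFReal, id]
  rw [ENNReal.toReal_ofReal (by positivity)]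
  ring_nf


lemma my_integral_id_gaussianReal {v : NNReal} (hv : v ≠ 0) (m : ℝ) :
    ∫ z, z ∂(gaussianReal m v) = m := by
  have hS : ∫ z, z ∂(gaussianReal 0 v) = 0 := by
    have hmap : (gaussianReal 0 v).map (fun z : ℝ => -1 * z) = gaussianReal 0 v := by
      rw [gaussianReal_map_const_mul]
      norm_num
    have h := integral_map (μ := gaussianReal 0 v) (φ := fun z : ℝ => -1 * z)
      ((measurable_id.const_mul (-1)).aemeasurable) (f := fun z : ℝ => z)
      aestronglyMeasurable_id
    rw [hmap] at h
    simp only [neg_one_mul] at h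
    rw [integral_neg] at h
    linarith
  have hmap : (gaussianReal 0 v).map (fun z : ℝ => z + m) = gaussianReal m v := by
    rw [gaussianReal_map_add_const, zero_add]
  have h := integral_map (μ := gaussianReal 0 v) (φ := fun z : ℝ => z + m)
    ((measurable_id.add_const m).aemeasurable) (f := fun z : ℝ => z)
    aestronglyMeasurable_id
  rw [hmap] at h
  rw [h, integral_add (f := fun z : ℝ => z) (my_integrable_id_gaussianReal hv 0) (integrable_const m), hS,
    integral_const, zero_add]
  simp


lemma my_pi_map_eval {ι : Type*} [Fintype ι] [DecidableEq ι] {α : ι → Type*}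
    [∀ i, MeasurableSpace (α i)] (μ : ∀ i, Measure (α i)) [∀ i, IsProbabilityMeasure (μ i)]
    (i : ι) : (Measure.pi μ).map (fun w => w i) = μ i := by
  ext s hs
  rw [Measure.map_apply (measurable_pi_apply i) hs]
  have : (fun w : ∀ j, α j => w i) ⁻¹' s = Set.pi Set.univ
      (Function.update (fun j => (Set.univ : Set (α j))) i s) := Set.eval_preimage
  rw [this, Measure.pi_pi, Finset.prod_eq_single i]
  · simp
  · intro j _ hj
    simp [Function.update_of_ne hj]
  · simp


lemma heat_map_add (n : ℕ) (t : ℝ) (x c : EuclideanSpace ℝ (Fin n)) :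
    (heatKernelMeasure n t x).map (· + c) = heatKernelMeasure n t (x + c) := by
  unfold heatKernelMeasure
  rw [Measure.map_map (measurable_add_const c) (MeasurableEquiv.measurable _)]
  have hco : ((· + c) ∘ ⇑(MeasurableEquiv.toLp 2 (Fin n → ℝ)))
      = ⇑(MeasurableEquiv.toLp 2 (Fin n → ℝ)) ∘ (fun w i => w i + c i) := by
    funext w
    ext i
    simp [MeasurableEquiv.toLp_apply, PiLp.add_apply]
  rw [hco, ← Measure.map_map (MeasurableEquiv.measurable _)
    (measurable_pi_iff.mpr fun i => (measurable_pi_apply i).add_const _)]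
  congr 1
  rw [(measurePreserving_pi _ _ fun i =>
    ⟨measurable_add_const (c i), gaussianReal_map_add_const (c i)⟩).map_eq]
  congr with i

lemma heat_prob (n : ℕ) (t : ℝ) (x : EuclideanSpace ℝ (Fin n)) :
    IsProbabilityMeasure (heatKernelMeasure n t x) := by
  unfold heatKernelMeasure
  exact Measure.isProbabilityMeasure_map (MeasurableEquiv.measurable _).aemeasurable


section
variable {n : ℕ} {t : ℝ} (ht : 0 < t)
include ht

lemma coord_integrable (x : EuclideanSpace ℝ (Fin n)) (i : Fin n) :
    Integrable (fun w : Fin n → ℝ => w i)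
      (Measure.pi fun j => gaussianReal (x j) ((2 * t).toNNReal)) := by
  have hv : ((2 * t).toNNReal) ≠ 0 := by
    simp only [ne_eq, Real.toNNReal_eq_zero, not_le]
    linarith
  have h := my_integrable_id_gaussianReal hv (x i)
  rw [← my_pi_map_eval (fun j => gaussianReal (x j) ((2 * t).toNNReal)) i] at h
  exact (integrable_map_measure aestronglyMeasurable_id
    (measurable_pi_apply i).aemeasurable).mp h

lemma coord_integral (x : EuclideanSpace ℝ (Fin n)) (i : Fin n) :
    ∫ w, w i ∂(Measure.pi fun j => gaussianReal (x j) ((2 * t).toNNReal)) = x i := by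
  have hv : ((2 * t).toNNReal) ≠ 0 := by
    simp only [ne_eq, Real.toNNReal_eq_zero, not_le]
    linarith
  have h := integral_map (μ := Measure.pi fun j => gaussianReal (x j) ((2 * t).toNNReal))
    (φ := fun w => w i) (measurable_pi_apply i).aemeasurable
    (f := fun z : ℝ => z) aestronglyMeasurable_id
  rw [my_pi_map_eval, my_integral_id_gaussianReal hv] at h
  exact h.symm

lemma inner_heat_integrable (x e₀ : EuclideanSpace ℝ (Fin n)) :
    Integrable (fun u : EuclideanSpace ℝ (Fin n) => ⟪u, e₀⟫) (heatKernelMeasure n t x) := by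
  unfold heatKernelMeasure
  rw [integrable_map_measure
    (Continuous.aestronglyMeasurable (f := fun u : EuclideanSpace ℝ (Fin n) => ⟪u, e₀⟫)
      (continuous_id.inner continuous_const))
    (MeasurableEquiv.measurable _).aemeasurable]
  have : ((fun u : EuclideanSpace ℝ (Fin n) => ⟪u, e₀⟫) ∘
      ⇑(MeasurableEquiv.toLp 2 (Fin n → ℝ)))
      = fun w : Fin n → ℝ => ∑ i, w i * e₀ i := by
    funext w
    simp [PiLp.inner_apply, MeasurableEquiv.toLp_apply, RCLike.inner_apply, conj_trivial, mul_comm]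
  rw [this]
  exact integrable_finset_sum _ fun i _ => (coord_integrable ht x i).mul_const _

lemma inner_heat_integral (x e₀ : EuclideanSpace ℝ (Fin n)) :
    ∫ u, ⟪u, e₀⟫ ∂(heatKernelMeasure n t x) = ⟪x, e₀⟫ := by
  unfold heatKernelMeasure
  rw [integral_map (MeasurableEquiv.measurable _).aemeasurable
    (Continuous.aestronglyMeasurable (continuous_id.inner continuous_const))]
  have : ∀ w : Fin n → ℝ, ⟪(MeasurableEquiv.toLp 2 (Fin n → ℝ)) w, e₀⟫
      = ∑ i, w i * e₀ i := by
    intro w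
    simp [PiLp.inner_apply, MeasurableEquiv.toLp_apply, RCLike.inner_apply, conj_trivial, mul_comm]
  simp_rw [this]
  rw [integral_finset_sum _ fun i _ => (coord_integrable ht x i).mul_const _]
  simp_rw [integral_mul_const, coord_integral ht x]
  simp [PiLp.inner_apply, RCLike.inner_apply, conj_trivial, mul_comm]

end


/-- The `p`-Wasserstein distance (to the power `p`) between the time-`t` heat kernel measures
on `ℝⁿ` started at `x` and `y` equals `‖x - y‖^p`: the Wasserstein distance between heat flows
started at Dirac masses is constant in time (zero curvature case). -/
theorem wasserstein_heat_kernels_euclidean (n : ℕ) (hn : 1 ≤ n) (t p : ℝ) (ht : 0 < t)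
    (hp : 1 ≤ p) (x y : EuclideanSpace ℝ (Fin n)) :
    (⨅ (π : Measure (EuclideanSpace ℝ (Fin n) × EuclideanSpace ℝ (Fin n)))
        (_ : π.map Prod.fst = heatKernelMeasure n t x
            ∧ π.map Prod.snd = heatKernelMeasure n t y),
      ∫⁻ z, ENNReal.ofReal (‖z.1 - z.2‖ ^ p) ∂π)
      = ENNReal.ofReal (‖x - y‖ ^ p) := by
  have hp0 : p ≠ 0 := by linarith
  have hp0' : (0:ℝ) ≤ p := by linarith
  haveI := heat_prob n t x
  haveI := heat_prob n t y
  have hmeas : Measurable fun z : EuclideanSpace ℝ (Fin n) × EuclideanSpace ℝ (Fin n) =>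
      ENNReal.ofReal (‖z.1 - z.2‖ ^ p) :=
    ((measurable_fst.sub measurable_snd).norm.pow_const p).ennreal_ofReal
  refine le_antisymm ?_ ?_
  · -- upper bound via the translation coupling
    set T : EuclideanSpace ℝ (Fin n) →
        EuclideanSpace ℝ (Fin n) × EuclideanSpace ℝ (Fin n) := fun u => (u, u + (y - x)) with hT
    have hTm : Measurable T := measurable_id.prodMk (measurable_add_const _)
    have h1 : ((heatKernelMeasure n t x).map T).map Prod.fst = heatKernelMeasure n t x := by
      rw [Measure.map_map measurable_fst hTm]
      exact Measure.map_id
    have h2 : ((heatKernelMeasure n t x).map T).map Prod.snd = heatKernelMeasure n t y := by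
      rw [Measure.map_map measurable_snd hTm]
      have : (Prod.snd ∘ T) = (· + (y - x)) := rfl
      rw [this, heat_map_add, add_sub_cancel]
    refine le_trans (iInf₂_le ((heatKernelMeasure n t x).map T) ⟨h1, h2⟩) (le_of_eq ?_)
    rw [lintegral_map hmeas hTm]
    have : ∀ u : EuclideanSpace ℝ (Fin n), ‖(T u).1 - (T u).2‖ = ‖x - y‖ := by
      intro u
      have : (T u).1 - (T u).2 = -(y - x) := by simp [hT]
      rw [this, norm_neg, norm_sub_rev]
    simp_rw [this]
    rw [lintegral_const, measure_univ, mul_one]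
  · -- lower bound
    refine le_iInf₂ fun π hπ => ?_
    by_cases hxy : x = y
    · simp [hxy, Real.zero_rpow hp0]
    haveI : IsProbabilityMeasure π := by
      constructor
      have h := congrArg (fun m : Measure (EuclideanSpace ℝ (Fin n)) => m Set.univ) hπ.1
      simp only [Measure.map_apply measurable_fst MeasurableSet.univ, Set.preimage_univ] at h
      rw [h]
      exact measure_univ
    have hne : ‖x - y‖ ≠ 0 := by simpa [sub_eq_zero] using hxy
    set e₀ : EuclideanSpace ℝ (Fin n) := ‖x - y‖⁻¹ • (x - y) with he₀def
    have he₀ : ‖e₀‖ = 1 := by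
      rw [he₀def, norm_smul, norm_inv, norm_norm, inv_mul_cancel₀ hne]
    set g : EuclideanSpace ℝ (Fin n) × EuclideanSpace ℝ (Fin n) → ℝ :=
      fun z => ⟪z.1 - z.2, e₀⟫ with hg
    have hcont : Continuous fun u : EuclideanSpace ℝ (Fin n) => ⟪u, e₀⟫ :=
      continuous_id.inner continuous_const
    have hg1 : Integrable (fun z : EuclideanSpace ℝ (Fin n) × EuclideanSpace ℝ (Fin n) =>
        ⟪z.1, e₀⟫) π := by
      have h := inner_heat_integrable ht x e₀
      rw [← hπ.1] at h
      exact (integrable_map_measure hcont.aestronglyMeasurable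
        measurable_fst.aemeasurable).mp h
    have hg2 : Integrable (fun z : EuclideanSpace ℝ (Fin n) × EuclideanSpace ℝ (Fin n) =>
        ⟪z.2, e₀⟫) π := by
      have h := inner_heat_integrable ht y e₀
      rw [← hπ.2] at h
      exact (integrable_map_measure hcont.aestronglyMeasurable
        measurable_snd.aemeasurable).mp h
    have hInt : ∫ z, g z ∂π = ‖x - y‖ := by
      have hgsub : ∀ z : EuclideanSpace ℝ (Fin n) × EuclideanSpace ℝ (Fin n),
          g z = ⟪z.1, e₀⟫ - ⟪z.2, e₀⟫ := fun z => by rw [hg]; exact inner_sub_left _ _ _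
      simp_rw [hgsub]
      rw [integral_sub hg1 hg2]
      have i1 : ∫ z, ⟪z.1, e₀⟫ ∂π = ⟪x, e₀⟫ := by
        have h := integral_map (μ := π) measurable_fst.aemeasurable hcont.aestronglyMeasurable
        rw [hπ.1, inner_heat_integral ht] at h
        exact h.symm
      have i2 : ∫ z, ⟪z.2, e₀⟫ ∂π = ⟪y, e₀⟫ := by
        have h := integral_map (μ := π) measurable_snd.aemeasurable hcont.aestronglyMeasurable
        rw [hπ.2, inner_heat_integral ht] at h
        exact h.symm
      rw [i1, i2, ← inner_sub_left, he₀def, real_inner_smul_right,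
        real_inner_self_eq_norm_mul_norm, ← mul_assoc, inv_mul_cancel₀ hne, one_mul]
    -- step 1 : ofReal ‖x - y‖ ≤ ∫⁻ ‖z.1 - z.2‖₊ ∂π
    have step1 : ENNReal.ofReal ‖x - y‖ ≤ ∫⁻ z, (‖z.1 - z.2‖₊ : ENNReal) ∂π := by
      calc ENNReal.ofReal ‖x - y‖ = ENNReal.ofReal (∫ z, g z ∂π) := by rw [hInt]
        _ ≤ (‖∫ z, g z ∂π‖₊ : ENNReal) := Real.ofReal_le_enorm _
        _ ≤ ∫⁻ z, (‖g z‖₊ : ENNReal) ∂π := enorm_integral_le_lintegral_enorm _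
        _ ≤ ∫⁻ z, (‖z.1 - z.2‖₊ : ENNReal) ∂π := by
            refine lintegral_mono fun z => ?_
            rw [← enorm_eq_nnnorm, ← enorm_eq_nnnorm, Real.enorm_eq_ofReal_abs, ← ofReal_norm_eq_enorm]
            refine ENNReal.ofReal_le_ofReal ?_
            calc |g z| ≤ ‖z.1 - z.2‖ * ‖e₀‖ := abs_real_inner_le_norm _ _
              _ = ‖z.1 - z.2‖ := by rw [he₀, mul_one]
    -- step 2 : Jensen via eLpNorm monotonicity
    set f : EuclideanSpace ℝ (Fin n) × EuclideanSpace ℝ (Fin n) → EuclideanSpace ℝ (Fin n) :=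
      fun z => z.1 - z.2 with hf
    have hfm : AEStronglyMeasurable f π :=
      (continuous_fst.sub continuous_snd).aestronglyMeasurable
    have step2 : eLpNorm f 1 π ≤ eLpNorm f (ENNReal.ofReal p) π :=
      eLpNorm_le_eLpNorm_of_exponent_le (by rwa [ENNReal.one_le_ofReal]) hfm
    rw [eLpNorm_one_eq_lintegral_enorm,
      eLpNorm_eq_lintegral_rpow_enorm_toReal (by simpa [ENNReal.ofReal_eq_zero] using (by linarith : ¬ p ≤ 0)) ENNReal.ofReal_ne_top,
      ENNReal.toReal_ofReal hp0'] at step2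
    have key : ENNReal.ofReal ‖x - y‖ ≤
        (∫⁻ z, (‖z.1 - z.2‖₊ : ENNReal) ^ p ∂π) ^ (1 / p) := le_trans step1 step2
    have hBeq : ∫⁻ z, (‖z.1 - z.2‖₊ : ENNReal) ^ p ∂π
        = ∫⁻ z, ENNReal.ofReal (‖z.1 - z.2‖ ^ p) ∂π := by
      refine lintegral_congr fun z => ?_
      rw [← enorm_eq_nnnorm, ← ofReal_norm_eq_enorm, ENNReal.ofReal_rpow_of_nonneg (norm_nonneg _) hp0']
    calc ENNReal.ofReal (‖x - y‖ ^ p) = (ENNReal.ofReal ‖x - y‖) ^ p := by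
          rw [ENNReal.ofReal_rpow_of_nonneg (norm_nonneg _) hp0']
      _ ≤ ((∫⁻ z, (‖z.1 - z.2‖₊ : ENNReal) ^ p ∂π) ^ (1 / p)) ^ p :=
          ENNReal.rpow_le_rpow key hp0'
      _ = ∫⁻ z, ENNReal.ofReal (‖z.1 - z.2‖ ^ p) ∂π := by
          rw [← ENNReal.rpow_mul, one_div_mul_cancel hp0, ENNReal.rpow_one, hBeq]
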